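/- arXiv:2406.14317 — 10 statements merged into one kernel-verified Lean document; each statement's English description precedes it below -/
import Mathlib

section
/- Let f : ℝ → ℝ be Lipschitz with constant L_f on [m,M], and let u⁻, u⁺ ∈ [m,M]. Then for every α ≥ L_f, the HLL intermediate state W(u⁻,u⁺) := (u⁻+u⁺)/2 − (f(u⁺)−f(u⁻))/(2α) satisfies m ≤ W(u⁻,u⁺) ≤ M. -/
/-- HLL intermediate state maximum principle. -/
theorem stmt0 (f : ℝ → ℝ) (m M Lf α : ℝ)
    (hLip : ∀ a ∈ Set.Icc m M, ∀ b ∈ Set.Icc m M, |f b - f a| ≤ Lf * |b - a|)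
    (um up : ℝ) (hum : um ∈ Set.Icc m M) (hup : up ∈ Set.Icc m M)
    (hα : Lf ≤ α) (hα0 : 0 < α) :
    (um + up) / 2 - (f up - f um) / (2 * α) ∈ Set.Icc m M := by
  have key : |f up - f um| ≤ α * |up - um| := by
    calc |f up - f um| ≤ Lf * |up - um| := hLip um hum up hup
    _ ≤ α * |up - um| := by
      apply mul_le_mul_of_nonneg_right hα (abs_nonneg _)
  have hq : |(f up - f um) / (2 * α)| ≤ |up - um| / 2 := by
    rw [abs_div, abs_of_pos (by linarith : (0:ℝ) < 2 * α)]
    rw [div_le_div_iff₀ (by linarith) (by norm_num)]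
    calc |f up - f um| * 2 ≤ α * |up - um| * 2 := by linarith
    _ = |up - um| * (2 * α) := by ring
  obtain ⟨h1, h2⟩ := abs_le.mp hq
  obtain ⟨hm1, hM1⟩ := hum
  obtain ⟨hm2, hM2⟩ := hup
  rcases abs_cases (up - um) with ⟨he, _⟩ | ⟨he, _⟩ <;>
    constructor <;> rw [he] at h1 h2 <;> linarith
end

section
/- Let f : ℝ → ℝ be Lipschitz with constant L_f on [m,M], let η : ℝ → ℝ be convex, and define the entropy flux q(u) = ∫ η'(w) f'(w) dw (i.e., q' = η' f' wherever f is differentiable). Then for u⁻, u⁺ ∈ [m,M] and α ≥ L_f, the intermediate state W(u⁻,u⁺) = (u⁻+u⁺)/2 − (f(u⁺)−f(u⁻))/(2α) satisfies η(W(u⁻,u⁺)) ≤ (η(u⁻)+η(u⁺))/2 − (q(u⁺)−q(u⁻))/(2α). -/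
/-!
Fix `u⁻` and let `D(u)` be the entropy defect of the HLL state `W(u⁻, u)`, i.e. the right-hand side
minus the left-hand side of the inequality with `u⁺ = u`; it vanishes at `u = u⁻`. Differentiating,
`D'(u) = (1/2 - f'(u)/(2α)) (η'(u) - η'(W(u⁻, u)))`. The first factor is nonnegative since
`|f'| ≤ α`, and the same Lipschitz bound puts `W(u⁻, u)` between `u⁻` and `u`, so the monotonicity
of `η'` gives the second factor the sign of `u - u⁻`. Hence `D` increases away from `u⁻`.
-/

open Set

noncomputable def hllState (f : ℝ → ℝ) (α a b : ℝ) : ℝ :=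
  (a + b) / 2 - (f b - f a) / (2 * α)

noncomputable def hllEntropyDefect (f η q : ℝ → ℝ) (α a u : ℝ) : ℝ :=
  (η a + η u) / 2 - (q u - q a) / (2 * α) - η (hllState f α a u)

section HLLState

variable {f : ℝ → ℝ} {α a b : ℝ}

lemma hasDerivAt_hllState {f' : ℝ} (hf : HasDerivAt f f' b) :
    HasDerivAt (hllState f α a) (1 / 2 - f' / (2 * α)) b := by
  have hmid : HasDerivAt (fun u => (a + u) / 2) (1 / 2) b := by
    simpa using ((hasDerivAt_id b).const_add a).div_const 2
  exact hmid.sub ((hf.sub_const (f a)).div_const (2 * α))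

lemma hllState_mem_uIcc (hα : 0 < α) (hf : |f b - f a| ≤ α * |b - a|) :
    hllState f α a b ∈ uIcc a b := by
  have hjump : |(f b - f a) / (2 * α)| ≤ |b - a| / 2 := by
    rw [abs_div, abs_of_pos (by positivity : 0 < 2 * α), div_le_iff₀ (by positivity)]
    linarith
  rw [mem_uIcc, hllState]
  rcases le_total a b with hab | hab
  · rw [abs_of_nonneg (sub_nonneg.2 hab)] at hjump
    have := abs_le.1 hjump
    left; constructor <;> linarith
  · rw [abs_of_nonpos (sub_nonpos.2 hab)] at hjump
    have := abs_le.1 hjump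
    right; constructor <;> linarith

end HLLState

lemma sub_mul_sub_nonneg_of_mem_uIcc {φ : ℝ → ℝ} (hφ : Monotone φ) {a x w : ℝ}
    (hw : w ∈ uIcc a x) : 0 ≤ (φ x - φ w) * (x - a) := by
  rcases le_total a x with hax | hxa
  · rw [uIcc_of_le hax] at hw
    exact mul_nonneg (sub_nonneg.2 (hφ hw.2)) (sub_nonneg.2 hax)
  · rw [uIcc_of_ge hxa] at hw
    exact mul_nonneg_of_nonpos_of_nonpos (sub_nonpos.2 (hφ hw.1)) (sub_nonpos.2 hxa)

lemma le_of_hasDerivAt_of_deriv_mul_sub_nonneg {g g' : ℝ → ℝ} {a b : ℝ}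
    (hg : ∀ x ∈ uIcc a b, HasDerivAt g (g' x) x) (hsign : ∀ x ∈ uIcc a b, 0 ≤ g' x * (x - a)) :
    g a ≤ g b := by
  have hcont : ContinuousOn g (uIcc a b) := fun x hx => (hg x hx).continuousAt.continuousWithinAt
  have hdiff : ∀ x ∈ interior (uIcc a b), HasDerivWithinAt g (g' x) (interior (uIcc a b)) x :=
    fun x hx => (hg x (interior_subset hx)).hasDerivWithinAt
  rcases le_total a b with hab | hba
  · rw [uIcc_of_le hab] at hcont hdiff hsign
    refine (monotoneOn_of_hasDerivWithinAt_nonneg (convex_Icc a b) hcont hdiff fun x hx => ?_)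
      (left_mem_Icc.2 hab) (right_mem_Icc.2 hab) hab
    rw [interior_Icc] at hx
    exact nonneg_of_mul_nonneg_left (hsign x (Ioo_subset_Icc_self hx)) (sub_pos.2 hx.1)
  · rw [uIcc_of_ge hba] at hcont hdiff hsign
    refine (antitoneOn_of_hasDerivWithinAt_nonpos (convex_Icc b a) hcont hdiff fun x hx => ?_)
      (left_mem_Icc.2 hba) (right_mem_Icc.2 hba) hba
    rw [interior_Icc] at hx
    exact nonpos_of_mul_nonneg_left (hsign x (Ioo_subset_Icc_self hx)) (sub_neg.2 hx.2)

lemma hasDerivAt_hllEntropyDefect {f η q : ℝ → ℝ} {α a u : ℝ} (hf : DifferentiableAt ℝ f u)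
    (hη : Differentiable ℝ η) (hq : HasDerivAt q (deriv η u * deriv f u) u) :
    HasDerivAt (hllEntropyDefect f η q α a)
      ((1 / 2 - deriv f u / (2 * α)) * (deriv η u - deriv η (hllState f α a u))) u := by
  have hmean : HasDerivAt (fun u => (η a + η u) / 2) (deriv η u / 2) u :=
    ((hη u).hasDerivAt.const_add (η a)).div_const 2
  have hstate := (hη (hllState f α a u)).hasDerivAt.comp u
    (hasDerivAt_hllState (α := α) (a := a) hf.hasDerivAt)
  exact ((hmean.sub ((hq.sub_const (q a)).div_const (2 * α))).sub hstate).congr_deriv (by ring)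

lemma hllEntropyDefect_deriv_mul_sub_nonneg {f φ : ℝ → ℝ} {α a x f' : ℝ} (hφ : Monotone φ)
    (hα : 0 < α) (hf' : |f'| ≤ α) (hf : |f x - f a| ≤ α * |x - a|) :
    0 ≤ (1 / 2 - f' / (2 * α)) * (φ x - φ (hllState f α a x)) * (x - a) := by
  have hfactor : 0 ≤ 1 / 2 - f' / (2 * α) := by
    rw [sub_nonneg, div_le_iff₀ (by positivity)]
    linarith [(abs_le.1 hf').2]
  rw [mul_assoc]
  exact mul_nonneg hfactor (sub_mul_sub_nonneg_of_mem_uIcc hφ (hllState_mem_uIcc hα hf))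

/-- Entropy inequality for the HLL intermediate state. -/
theorem stmt1 (f η : ℝ → ℝ) (m M Lf α : ℝ)
    (hf : ContDiff ℝ 1 f) (hf' : ∀ w ∈ Set.Icc m M, |deriv f w| ≤ Lf)
    (hη : ContDiff ℝ 1 η) (hηcvx : ConvexOn ℝ Set.univ η)
    (q : ℝ → ℝ) (hq : ∀ u, q u = ∫ w in m..u, deriv η w * deriv f w)
    (um up : ℝ) (hum : um ∈ Set.Icc m M) (hup : up ∈ Set.Icc m M)
    (hLf : 0 < Lf) (hα : Lf ≤ α) :
    η ((um + up) / 2 - (f up - f um) / (2 * α)) ≤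
      (η um + η up) / 2 - (q up - q um) / (2 * α) := by
  have hα0 : 0 < α := hLf.trans_le hα
  have hfd : Differentiable ℝ f := hf.differentiable one_ne_zero
  have hηd : Differentiable ℝ η := hη.differentiable one_ne_zero
  have hη'mono : Monotone (deriv η) := monotoneOn_univ.1 (hηcvx.monotoneOn_deriv fun x _ => hηd x)
  have hderiv_le : ∀ x ∈ Icc m M, |deriv f x| ≤ α := fun x hx => (hf' x hx).trans hα
  have hlip : ∀ x ∈ Icc m M, |f x - f um| ≤ α * |x - um| := fun x hx => by
    simpa using (convex_Icc m M).norm_image_sub_le_of_norm_deriv_le (fun z _ => hfd z)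
      (by simpa using hderiv_le) hum hx
  have hqd : ∀ u, HasDerivAt q (deriv η u * deriv f u) u := by
    rw [funext hq]
    exact fun u =>
      ((hη.continuous_deriv le_rfl).mul (hf.continuous_deriv le_rfl)).integral_hasStrictDerivAt
        m u |>.hasDerivAt
  have hsub : uIcc um up ⊆ Icc m M := uIcc_subset_Icc hum hup
  have key := le_of_hasDerivAt_of_deriv_mul_sub_nonneg (a := um) (b := up)
    (fun x _ => hasDerivAt_hllEntropyDefect (α := α) (a := um) (hfd x) hηd (hqd x))
    (fun x hx => hllEntropyDefect_deriv_mul_sub_nonneg hη'mono hα0 (hderiv_le x (hsub hx))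
      (hlip x (hsub hx)))
  simp only [hllEntropyDefect, hllState, sub_self, zero_div, add_self_div_two, sub_zero] at key
  linarith
end

section
/- Let ϑ : ℝ → ℝ be C² with ϑ'' > 0, set v = ϑ', and let u = u(v) denote the inverse of v. For u⁻ ≠ u⁺ in [m,M] with v± = ϑ'(u±), define β(u⁻,u⁺) = (1/2) ∫₀¹ (u(θv⁺+(1−θ)v⁻) − u⁻)/(u⁺−u⁻) dθ. Then β(u⁻,u⁺) ∈ (0, 1/2]. -/
/-- The coefficient β(u⁻,u⁺) lies in (0, 1/2]. -/
theorem stmt2 (ϑ uinv : ℝ → ℝ) (m M : ℝ)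
    (hϑ : ContDiff ℝ 2 ϑ) (hconv : ∀ x, 0 < deriv (deriv ϑ) x)
    (hinvL : Function.LeftInverse uinv (deriv ϑ))
    (hinvR : Function.RightInverse uinv (deriv ϑ))
    (hcont : Continuous uinv)
    (um up : ℝ) (hum : um ∈ Set.Icc m M) (hup : up ∈ Set.Icc m M) (hne : um ≠ up) :
    (1 / 2) * (∫ θ in (0:ℝ)..1,
        (uinv (θ * deriv ϑ up + (1 - θ) * deriv ϑ um) - um) / (up - um))
      ∈ Set.Ioc (0 : ℝ) (1 / 2) := by
  set v := deriv ϑ with hv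
  have hvmono : StrictMono v := strictMono_of_deriv_pos hconv
  have humono : StrictMono uinv := by
    intro a b hab
    by_contra hle
    push_neg at hle
    have : b ≤ a := by
      have := hvmono.monotone hle
      rwa [hinvR a, hinvR b] at this
    linarith
  -- the integrand
  set g : ℝ → ℝ := fun θ => (uinv (θ * v up + (1 - θ) * v um) - um) / (up - um) with hg
  have hgcont : Continuous g := by
    apply Continuous.div_const
    apply Continuous.sub _ continuous_const
    exact hcont.comp (by continuity)
  have hgint : IntervalIntegrable g MeasureTheory.volume 0 1 :=
    hgcont.intervalIntegrable 0 1
  -- pointwise bounds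
  have hf0 : ∀ θ : ℝ, θ ∈ Set.Ioo (0:ℝ) 1 → 0 < g θ ∧ g θ ≤ 1 := by
    intro θ hθ
    obtain ⟨h0, h1⟩ := hθ
    rcases hne.lt_or_gt with hlt | hlt
    · have hvlt : v um < v up := hvmono hlt
      have hc1 : v um < θ * v up + (1 - θ) * v um := by nlinarith
      have hc2 : θ * v up + (1 - θ) * v um < v up := by nlinarith
      have h1' : um < uinv (θ * v up + (1 - θ) * v um) := by
        have := humono hc1; rwa [hinvL um] at this
      have h2' : uinv (θ * v up + (1 - θ) * v um) < up := by
        have := humono hc2; rwa [hinvL up] at this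
      constructor
      · exact div_pos (by linarith) (by linarith)
      · rw [div_le_one (by linarith)]; linarith
    · have hvlt : v up < v um := hvmono hlt
      have hc1 : v up < θ * v up + (1 - θ) * v um := by nlinarith
      have hc2 : θ * v up + (1 - θ) * v um < v um := by nlinarith
      have h1' : up < uinv (θ * v up + (1 - θ) * v um) := by
        have := humono hc1; rwa [hinvL up] at this
      have h2' : uinv (θ * v up + (1 - θ) * v um) < um := by
        have := humono hc2; rwa [hinvL um] at this
      constructor
      · exact div_pos_of_neg_of_neg (by linarith) (by linarith)
      · rw [div_le_one_iff]
        right; right; exact ⟨by linarith, by linarith⟩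
  have hpos : 0 < ∫ θ in (0:ℝ)..1, g θ :=
    intervalIntegral.intervalIntegral_pos_of_pos_on hgint
      (fun x hx => (hf0 x hx).1) one_pos
  have hle : (∫ θ in (0:ℝ)..1, g θ) ≤ 1 := by
    have : (∫ θ in (0:ℝ)..1, g θ) ≤ ∫ _ in (0:ℝ)..1, (1:ℝ) := by
      apply intervalIntegral.integral_mono_on zero_le_one hgint
        (intervalIntegrable_const)
      intro x hx
      rcases eq_or_lt_of_le hx.1 with h0 | h0
      · have : g 0 = 0 := by
          simp only [hg]
          norm_num
          rw [hinvL um]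
          simp
        rw [← h0, this]; norm_num
      rcases eq_or_lt_of_le hx.2 with h1 | h1
      · have : g 1 = 1 := by
          simp only [hg]
          norm_num
          rw [hinvL up]
          exact div_self (sub_ne_zero.mpr (Ne.symm hne))
        rw [h1, this]
      · exact (hf0 x ⟨h0, h1⟩).2
    simpa using this
  constructor
  · linarith
  · linarith
end

section
/- With ϑ strictly convex, v = ϑ', and u(v) its inverse, the entropy-conservative flux defined by the Tadmor condition (v(u⁺)−v(u⁻)) h_ec(u⁻,u⁺) = ψ(u⁺) − ψ(u⁻), where ψ(u) = v(u) f(u) − g(u) and g' = v f', admits the closed form h_ec(u⁻,u⁺) = ∫₀¹ f(u(θ v(u⁺)+(1−θ) v(u⁻))) dθ for u⁻ ≠ u⁺. -/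
/-!
Differentiating the Tadmor condition's right-hand side: since `g' = v f'`, the potential
`ψ = v f - g` has `ψ' = v' f`, so `ψ(u⁺) - ψ(u⁻) = ∫_{u⁻}^{u⁺} v'(w) f(w) dw`. Substituting
`x = v(w)` turns this into `∫_{v(u⁻)}^{v(u⁺)} f(u(x)) dx`, and the affine substitution
`x = θ v(u⁺) + (1 - θ) v(u⁻)` rewrites it as `(v(u⁺) - v(u⁻)) ∫₀¹ f(u(…)) dθ`. Dividing by
`v(u⁺) - v(u⁻)`, nonzero because `v` has a left inverse, gives the closed form.
-/

open intervalIntegral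

theorem integral_eq_sub_smul_integral_zero_one {E : Type*} [NormedAddCommGroup E]
    [NormedSpace ℝ E] (F : ℝ → E) (x y : ℝ) :
    ∫ t in x..y, F t = (y - x) • ∫ θ in (0:ℝ)..1, F (θ * y + (1 - θ) * x) := by
  have h := smul_integral_comp_mul_add (a := 0) (b := 1) F (y - x) x
  simp only [mul_zero, zero_add, mul_one, sub_add_cancel] at h
  rw [← h]
  congr 2 with θ
  ring_nf

theorem integral_comp_of_leftInverse {E : Type*} [NormedAddCommGroup E] [NormedSpace ℝ E]
    {v uinv : ℝ → ℝ} {F : ℝ → E} (hv : ContDiff ℝ 1 v) (hinv : Function.LeftInverse uinv v)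
    (hF : Continuous (F ∘ uinv)) (a b : ℝ) :
    ∫ x in v a..v b, F (uinv x) = ∫ w in a..b, deriv v w • F w := by
  have h := integral_deriv_smul_comp (a := a) (b := b)
    (fun x _ => (hv.differentiable one_ne_zero x).hasDerivAt)
    (hv.continuous_deriv le_rfl).continuousOn hF
  simp only [Function.comp_apply, hinv _] at h
  exact h.symm

theorem hasDerivAt_mul_sub_integral_mul_deriv {v f : ℝ → ℝ} (hv : Differentiable ℝ v)
    (hf : ContDiff ℝ 1 f) (u : ℝ) :
    HasDerivAt (fun u => v u * f u - ∫ w in (0:ℝ)..u, v w * deriv f w) (deriv v u * f u) u := by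
  have hg : HasDerivAt (fun u => ∫ w in (0:ℝ)..u, v w * deriv f w) (v u * deriv f u) u :=
    ((hv.continuous.mul (hf.continuous_deriv le_rfl)).integral_hasStrictDerivAt 0 u).hasDerivAt
  exact (((hv u).hasDerivAt.mul ((hf.differentiable one_ne_zero) u).hasDerivAt).sub hg).congr_deriv
    (add_sub_cancel_right _ _)

theorem integral_deriv_mul_eq_sub_of_contDiff {v f : ℝ → ℝ} (hv : ContDiff ℝ 1 v)
    (hf : ContDiff ℝ 1 f) (a b : ℝ) :
    ∫ w in a..b, deriv v w * f w =
      (v b * f b - ∫ w in (0:ℝ)..b, v w * deriv f w) -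
        (v a * f a - ∫ w in (0:ℝ)..a, v w * deriv f w) :=
  integral_eq_sub_of_hasDerivAt
    (fun u _ => hasDerivAt_mul_sub_integral_mul_deriv (hv.differentiable one_ne_zero) hf u)
    (((hv.continuous_deriv le_rfl).mul hf.continuous).intervalIntegrable a b)

theorem stmt3_general (f ϑ uinv : ℝ → ℝ) (hec : ℝ → ℝ → ℝ) (g ψ : ℝ → ℝ)
    (hf : ContDiff ℝ 1 f)
    (hϑ : ContDiff ℝ 2 ϑ)
    (hinvL : Function.LeftInverse uinv (deriv ϑ))
    (hcont : Continuous uinv)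
    (hg : ∀ u, g u = ∫ w in (0:ℝ)..u, deriv ϑ w * deriv f w)
    (hψ : ∀ u, ψ u = deriv ϑ u * f u - g u)
    (htad : ∀ a b, (deriv ϑ b - deriv ϑ a) * hec a b = ψ b - ψ a)
    (um up : ℝ) (hne : um ≠ up) :
    hec um up = ∫ θ in (0:ℝ)..1,
      f (uinv (θ * deriv ϑ up + (1 - θ) * deriv ϑ um)) := by
  have hv : ContDiff ℝ 1 (deriv ϑ) := ((contDiff_succ_iff_deriv (n := 1)).mp hϑ).2.2
  have hvne : deriv ϑ up - deriv ϑ um ≠ 0 := sub_ne_zero.mpr (hinvL.injective.ne hne.symm)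
  refine mul_left_cancel₀ hvne ?_
  rw [htad, hψ, hψ, hg, hg, ← integral_deriv_mul_eq_sub_of_contDiff hv hf,
    ← smul_eq_mul, ← integral_eq_sub_smul_integral_zero_one (fun x => f (uinv x))]
  simpa only [smul_eq_mul] using
    (integral_comp_of_leftInverse hv hinvL (hf.continuous.comp hcont) um up).symm

/-- Closed form of the entropy-conservative flux defined by the Tadmor condition. -/
theorem stmt3 (f ϑ uinv : ℝ → ℝ) (hec : ℝ → ℝ → ℝ) (g ψ : ℝ → ℝ)
    (hf : ContDiff ℝ 1 f)
    (hϑ : ContDiff ℝ 2 ϑ) (hconv : ∀ x, 0 < deriv (deriv ϑ) x)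
    (hinvL : Function.LeftInverse uinv (deriv ϑ))
    (hinvR : Function.RightInverse uinv (deriv ϑ))
    (hcont : Continuous uinv)
    (hg : ∀ u, g u = ∫ w in (0:ℝ)..u, deriv ϑ w * deriv f w)
    (hψ : ∀ u, ψ u = deriv ϑ u * f u - g u)
    (htad : ∀ a b, (deriv ϑ b - deriv ϑ a) * hec a b = ψ b - ψ a)
    (um up : ℝ) (hne : um ≠ up) :
    hec um up = ∫ θ in (0:ℝ)..1,
      f (uinv (θ * deriv ϑ up + (1 - θ) * deriv ϑ um)) :=
  stmt3_general f ϑ uinv hec g ψ hf hϑ hinvL hcont hg hψ htad um up hne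
end

section
/- Let f : ℝ → ℝ be Lipschitz with constant L_f on [m,M], ϑ strictly convex with v = ϑ' and inverse u(·), and let h_ec(u⁻,u⁺) = ∫₀¹ f(u(θ v(u⁺)+(1−θ) v(u⁻))) dθ be the EC flux. For u⁻, u⁺ ∈ [m,M], α ≥ L_f, and β = β(u⁻,u⁺) as in the paper, the state U(u⁻,u⁺) := (1−β)u⁻ + β u⁺ − (h_ec(u⁻,u⁺) − f(u⁻))/(2α) satisfies m ≤ U(u⁻,u⁺) ≤ M. -/
/-- Maximum principle for the intermediate state built on the EC flux. -/
theorem stmt4 (f ϑ uinv : ℝ → ℝ) (m M Lf α : ℝ)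
    (hLip : ∀ a ∈ Set.Icc m M, ∀ b ∈ Set.Icc m M, |f b - f a| ≤ Lf * |b - a|)
    (hϑ : ContDiff ℝ 2 ϑ) (hconv : ∀ x, 0 < deriv (deriv ϑ) x)
    (hinvL : Function.LeftInverse uinv (deriv ϑ))
    (hinvR : Function.RightInverse uinv (deriv ϑ))
    (hcont : Continuous uinv)
    (hec : ℝ → ℝ → ℝ)
    (hhec : ∀ a b, hec a b = ∫ θ in (0:ℝ)..1,
        f (uinv (θ * deriv ϑ b + (1 - θ) * deriv ϑ a)))
    (β : ℝ → ℝ → ℝ)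
    (hβdiag : ∀ a, β a a = 1 / 4)
    (hβ : ∀ a b, a ≠ b → β a b = (1 / 2) * ∫ θ in (0:ℝ)..1,
        (uinv (θ * deriv ϑ b + (1 - θ) * deriv ϑ a) - a) / (b - a))
    (um up : ℝ) (hum : um ∈ Set.Icc m M) (hup : up ∈ Set.Icc m M)
    (hLf : 0 < Lf) (hα : Lf ≤ α) :
    (1 - β um up) * um + β um up * up - (hec um up - f um) / (2 * α)
      ∈ Set.Icc m M := by
  obtain ⟨hm1, hM1⟩ := hum
  obtain ⟨hm2, hM2⟩ := hup
  have hα0 : 0 < α := lt_of_lt_of_le hLf hα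
  have hvC : Continuous (deriv ϑ) := hϑ.continuous_deriv (by norm_num)
  set g : ℝ → ℝ := fun θ => uinv (θ * deriv ϑ up + (1 - θ) * deriv ϑ um) with hg
  have hgC : Continuous g := hcont.comp (by fun_prop)
  -- the interpolated state lies in [m, M]
  have hmem : ∀ θ ∈ Set.Icc (0:ℝ) 1, g θ ∈ Set.Icc m M := by
    intro θ hθ
    have hx : θ * deriv ϑ up + (1 - θ) * deriv ϑ um
        ∈ Set.uIcc (deriv ϑ um) (deriv ϑ up) := by
      rcases le_total (deriv ϑ um) (deriv ϑ up) with h | h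
      · rw [Set.uIcc_of_le h]
        exact ⟨by nlinarith [hθ.1, hθ.2], by nlinarith [hθ.1, hθ.2]⟩
      · rw [Set.uIcc_of_ge h]
        exact ⟨by nlinarith [hθ.1, hθ.2], by nlinarith [hθ.1, hθ.2]⟩
    obtain ⟨c, hc, hvc⟩ := intermediate_value_uIcc (hvC.continuousOn
      (s := Set.uIcc um up)) hx
    have hgc : g θ = c := by rw [hg]; simp only; rw [← hvc, hinvL]
    rw [hgc]
    exact Set.uIcc_subset_Icc ⟨hm1, hM1⟩ ⟨hm2, hM2⟩ hc
  -- continuity of f ∘ g on [0,1]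
  have hfgC : ContinuousOn (fun θ => f (g θ)) (Set.Icc (0:ℝ) 1) := by
    have hfL : LipschitzOnWith (Real.toNNReal Lf) f (Set.Icc m M) := by
      rw [lipschitzOnWith_iff_dist_le_mul]
      intro x hx y hy
      rw [Real.dist_eq, Real.dist_eq, Real.coe_toNNReal _ hLf.le]
      exact hLip y hy x hx
    exact hfL.continuousOn.comp hgC.continuousOn (fun θ hθ => hmem θ hθ)
  -- the pointwise state
  set F : ℝ → ℝ := fun θ => um + (g θ - um) / 2 - (f (g θ) - f um) / (2 * α) with hF
  have hFC : ContinuousOn F (Set.Icc (0:ℝ) 1) :=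
    (continuousOn_const.add ((hgC.continuousOn.sub continuousOn_const).div_const _)).sub
      ((hfgC.sub continuousOn_const).div_const _)
  have hFint : IntervalIntegrable F MeasureTheory.volume 0 1 := by
    apply ContinuousOn.intervalIntegrable
    rwa [Set.uIcc_of_le (by norm_num : (0:ℝ) ≤ 1)]
  have hFbound : ∀ θ ∈ Set.Icc (0:ℝ) 1, F θ ∈ Set.Icc m M := by
    intro θ hθ
    obtain ⟨hw1, hw2⟩ := hmem θ hθ
    set w := g θ with hw
    have hd : |f w - f um| ≤ α * |w - um| :=
      le_trans (hLip um ⟨hm1, hM1⟩ w ⟨hw1, hw2⟩)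
        (by nlinarith [abs_nonneg (w - um)])
    obtain ⟨hd1, hd2⟩ := abs_le.mp hd
    have h2 : (f w - f um) / (2 * α) ≤ |w - um| / 2 := by
      rw [div_le_div_iff₀ (by positivity) (by norm_num)]; nlinarith
    have h3 : -(|w - um| / 2) ≤ (f w - f um) / (2 * α) := by
      rw [le_div_iff₀ (by positivity)]; nlinarith
    rcases abs_cases (w - um) with ⟨he, _⟩ | ⟨he, _⟩ <;>
      rw [he] at h2 h3 <;>
      exact ⟨by simp only [hF]; linarith, by simp only [hF]; linarith⟩
  have hI : (∫ θ in (0:ℝ)..1, F θ) ∈ Set.Icc m M := by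
    constructor
    · have := intervalIntegral.integral_mono_on (by norm_num : (0:ℝ) ≤ 1)
        (intervalIntegrable_const (c := m)) hFint (fun θ hθ => (hFbound θ hθ).1)
      simpa using this
    · have := intervalIntegral.integral_mono_on (by norm_num : (0:ℝ) ≤ 1)
        hFint (intervalIntegrable_const (c := M)) (fun θ hθ => (hFbound θ hθ).2)
      simpa using this
  rcases eq_or_ne um up with heq | hne
  · subst heq
    have h1 : hec um um = f um := by
      rw [hhec]
      have hcong : ∀ θ ∈ Set.uIcc (0:ℝ) 1,
          f (uinv (θ * deriv ϑ um + (1 - θ) * deriv ϑ um)) = f um := by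
        intro θ _
        rw [show θ * deriv ϑ um + (1 - θ) * deriv ϑ um = deriv ϑ um by ring, hinvL]
      rw [intervalIntegral.integral_congr hcong]
      simp
    rw [h1]
    have : (1 - β um um) * um + β um um * um - (f um - f um) / (2 * α) = um := by ring
    rw [this]
    exact ⟨hm1, hM1⟩
  · have hne' : up - um ≠ 0 := sub_ne_zero.mpr (Ne.symm hne)
    have hint1 : IntervalIntegrable (fun θ => g θ - um) MeasureTheory.volume 0 1 :=
      (hgC.sub continuous_const).intervalIntegrable 0 1
    have hint2 : IntervalIntegrable (fun θ => f (g θ) - f um) MeasureTheory.volume 0 1 := by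
      apply ContinuousOn.intervalIntegrable
      rw [Set.uIcc_of_le (by norm_num : (0:ℝ) ≤ 1)]
      exact hfgC.sub continuousOn_const
    have hβval : β um up = (1 / 2) * ((∫ θ in (0:ℝ)..1, (g θ - um)) / (up - um)) := by
      rw [hβ um up hne, ← intervalIntegral.integral_div]
    have hhecval : hec um up = (∫ θ in (0:ℝ)..1, (f (g θ) - f um)) + f um := by
      rw [hhec]
      have : (∫ θ in (0:ℝ)..1, f (g θ))
          = ∫ θ in (0:ℝ)..1, ((f (g θ) - f um) + f um) := by
        congr 1
        ext θ
        ring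
      rw [show (∫ θ in (0:ℝ)..1, f (uinv (θ * deriv ϑ up + (1 - θ) * deriv ϑ um)))
          = ∫ θ in (0:ℝ)..1, f (g θ) from rfl, this,
        intervalIntegral.integral_add hint2 intervalIntegrable_const]
      simp
    have hsplit : (∫ θ in (0:ℝ)..1, F θ)
        = um + (∫ θ in (0:ℝ)..1, (g θ - um)) / 2
          - (∫ θ in (0:ℝ)..1, (f (g θ) - f um)) / (2 * α) := by
      rw [show F = fun θ => (um + (g θ - um) / 2) - (f (g θ) - f um) / (2 * α) from rfl]
      rw [intervalIntegral.integral_sub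
          (intervalIntegrable_const.add (hint1.div_const 2)) (hint2.div_const _),
        intervalIntegral.integral_add intervalIntegrable_const (hint1.div_const 2),
        intervalIntegral.integral_div, intervalIntegral.integral_div]
      simp
    have hIeq : (1 - β um up) * um + β um up * up - (hec um up - f um) / (2 * α)
        = ∫ θ in (0:ℝ)..1, F θ := by
      rw [hβval, hhecval, hsplit]
      field_simp
      ring
    rw [hIeq]
    exact hI
end

section
/- Under the hypotheses of the previous statement and for any convex C¹ entropy η with entropy flux q (q' = η' f'), with q_ec(u⁻,u⁺) = ∫₀¹ q(u(θv⁺+(1−θ)v⁻)) dθ and η̄(u⁻,u⁺) = ∫₀¹ η(u(θv⁺+(1−θ)v⁻)) dθ, one has η(U(u⁻,u⁺)) ≤ (η(u⁻) + η̄(u⁻,u⁺))/2 − (q_ec(u⁻,u⁺) − q(u⁻))/(2α). -/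
/-!
Put `u θ = uinv (θ ϑ'(u⁺) + (1 - θ) ϑ'(u⁻))`; since `uinv` inverts the increasing map `ϑ'`, these
states lie between `u⁻` and `u⁺`. The weight `β` is chosen so that `U(u⁻, u⁺)` is the `θ`-average of
the HLL states `w(u θ)`, `w(a) = (u⁻ + a)/2 - (f a - f u⁻)/(2α)`, and the right-hand side is the
`θ`-average of the matching entropy expressions. By Jensen it therefore suffices to prove the
three-point inequality `η(w a) ≤ (η u⁻ + η a)/2 - (q a - q u⁻)/(2α)` for each `a ∈ [m, M]`. Its gap
vanishes at `a = u⁻` and has derivative `(1/2 - f'(a)/(2α)) (η'(a) - η'(w a))`; as `|f'| ≤ α`,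
`w a` lies between `u⁻` and `a`, so by monotonicity of `η'` this derivative has the sign of `a - u⁻`.
-/

open Set MeasureTheory

theorem le_of_hasDerivAt_of_mul_sub_nonneg {G G' : ℝ → ℝ} {m M c a : ℝ}
    (hG : ∀ x, HasDerivAt G (G' x) x) (hsign : ∀ x ∈ Ioo m M, 0 ≤ G' x * (x - c))
    (hc : c ∈ Icc m M) (ha : a ∈ Icc m M) : G c ≤ G a := by
  have hcont : ContinuousOn G univ :=
    (continuous_iff_continuousAt.2 fun x => (hG x).continuousAt).continuousOn
  have hdiff : ∀ s, DifferentiableOn ℝ G s := fun _ x _ =>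
    (hG x).differentiableAt.differentiableWithinAt
  rcases le_total c a with hca | hac
  · refine monotoneOn_of_deriv_nonneg (convex_Icc c a) (hcont.mono (subset_univ _)) (hdiff _)
      (fun x hx => ?_) ⟨le_rfl, hca⟩ ⟨hca, le_rfl⟩ hca
    rw [interior_Icc] at hx
    rw [(hG x).deriv]
    exact nonneg_of_mul_nonneg_left (hsign x ⟨hc.1.trans_lt hx.1, hx.2.trans_le ha.2⟩)
      (sub_pos.2 hx.1)
  · refine antitoneOn_of_deriv_nonpos (convex_Icc a c) (hcont.mono (subset_univ _)) (hdiff _)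
      (fun x hx => ?_) ⟨le_rfl, hac⟩ ⟨hac, le_rfl⟩ hac
    rw [interior_Icc] at hx
    rw [(hG x).deriv]
    exact nonpos_of_mul_nonneg_left (hsign x ⟨ha.1.trans_lt hx.1, hx.2.trans_le hc.2⟩)
      (sub_neg.2 hx.2)

theorem Monotone.sub_mul_nonneg_of_sub_mul_nonneg {g : ℝ → ℝ} (hg : Monotone g) {x y c : ℝ}
    (h : 0 ≤ (x - y) * (x - c)) : 0 ≤ (g x - g y) * (x - c) := by
  rcases lt_trichotomy x c with hxc | rfl | hxc
  · have hxy : x ≤ y := by nlinarith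
    nlinarith [hg hxy]
  · simp
  · have hyx : y ≤ x := by nlinarith
    nlinarith [hg hyx]

theorem ConvexOn.map_intervalIntegral_zero_one_le {g φ : ℝ → ℝ} (hg : ConvexOn ℝ univ g)
    (hφ : Continuous φ) : g (∫ θ in (0:ℝ)..1, φ θ) ≤ ∫ θ in (0:ℝ)..1, g (φ θ) := by
  have hgc : Continuous g := continuousOn_univ.1 (hg.continuousOn isOpen_univ)
  have : IsProbabilityMeasure (volume.restrict (Ioc (0:ℝ) 1)) := ⟨by simp⟩
  simp only [intervalIntegral.integral_of_le zero_le_one]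
  exact hg.map_integral_le hgc.continuousOn isClosed_univ (.of_forall fun _ => mem_univ _)
    hφ.integrableOn_Ioc (hgc.comp hφ).integrableOn_Ioc

theorem StrictMono.rightInverse_mem_uIcc {v w : ℝ → ℝ} (hv : StrictMono v)
    (hw : Function.RightInverse w v) {a b y : ℝ} (hy : y ∈ uIcc (v a) (v b)) :
    w y ∈ uIcc a b := by
  rw [mem_uIcc] at hy ⊢
  rw [← hw y, hv.le_iff_le, hv.le_iff_le, hv.le_iff_le, hv.le_iff_le] at hy
  exact hy

theorem mul_add_one_sub_mul_mem_uIcc {x y θ : ℝ} (hθ : θ ∈ Icc (0:ℝ) 1) :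
    θ * y + (1 - θ) * x ∈ uIcc x y :=
  segment_subset_uIcc x y ⟨1 - θ, θ, by linarith [hθ.2], hθ.1, by ring, by simp; ring⟩

/-- With `g = id` and `F = f` this is the HLL intermediate state of the Riemann problem
`(uL, uR)` with signal speeds `±α`; with `(g, F) = (η, q)` it is the matching entropy average. -/
noncomputable def hllMean (g F : ℝ → ℝ) (α uL uR : ℝ) : ℝ :=
  (g uL + g uR) / 2 - (F uR - F uL) / (2 * α)

theorem hasDerivAt_hllMean {g F : ℝ → ℝ} {g' F' α b a : ℝ} (hg : HasDerivAt g g' a)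
    (hF : HasDerivAt F F' a) :
    HasDerivAt (hllMean g F α b) (g' / 2 - F' / (2 * α)) a :=
  ((hg.const_add (g b)).div_const 2).sub ((hF.sub_const (F b)).div_const (2 * α))

theorem Continuous.hllMean {g F : ℝ → ℝ} (hg : Continuous g) (hF : Continuous F) (α b : ℝ) :
    Continuous (hllMean g F α b) := by
  unfold _root_.hllMean
  fun_prop

theorem sub_hllMean_mul_nonneg {f : ℝ → ℝ} {α a b : ℝ} (hα : 0 < α)
    (hf : |f a - f b| ≤ α * |a - b|) : 0 ≤ (a - hllMean id f α b a) * (a - b) := by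
  have hexp : (a - hllMean id f α b a) * (a - b) =
      (α * (a - b) ^ 2 + (f a - f b) * (a - b)) / (2 * α) := by
    simp only [hllMean, id]
    field_simp
    ring
  rw [hexp]
  apply div_nonneg _ (by positivity)
  have hcross : -((f a - f b) * (a - b)) ≤ |f a - f b| * |a - b| := by
    rw [← abs_mul]; exact neg_le_abs _
  nlinarith [mul_le_mul_of_nonneg_right hf (abs_nonneg (a - b)), sq_abs (a - b)]

theorem integral_hllMean_comp {g F u : ℝ → ℝ}
    (hg : IntervalIntegrable (fun θ => g (u θ)) volume 0 1)
    (hF : IntervalIntegrable (fun θ => F (u θ)) volume 0 1) (α b : ℝ) :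
    ∫ θ in (0:ℝ)..1, hllMean g F α b (u θ) =
      (g b + ∫ θ in (0:ℝ)..1, g (u θ)) / 2 - ((∫ θ in (0:ℝ)..1, F (u θ)) - F b) / (2 * α) := by
  unfold hllMean
  rw [intervalIntegral.integral_sub ((intervalIntegrable_const.add hg).div_const _)
      ((hF.sub intervalIntegrable_const).div_const _),
    intervalIntegral.integral_div, intervalIntegral.integral_div,
    intervalIntegral.integral_add intervalIntegrable_const hg,
    intervalIntegral.integral_sub hF intervalIntegrable_const]
  simp

section HLL

variable {f η q : ℝ → ℝ} {m M α : ℝ}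

theorem map_hllMean_le_hllMean (hf : Differentiable ℝ f) (hf' : ∀ x ∈ Icc m M, |deriv f x| ≤ α)
    (hη : Differentiable ℝ η) (hηcvx : ConvexOn ℝ univ η)
    (hq : ∀ x, HasDerivAt q (deriv η x * deriv f x) x) (hα : 0 < α) {b a : ℝ}
    (hb : b ∈ Icc m M) (ha : a ∈ Icc m M) :
    η (hllMean id f α b a) ≤ hllMean η q α b a := by
  set w := hllMean id f α b
  have hw : ∀ x, HasDerivAt w (1 / 2 - deriv f x / (2 * α)) x := fun x =>
    hasDerivAt_hllMean (hasDerivAt_id x) (hf x).hasDerivAt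
  have hgap : ∀ x, HasDerivAt (fun x => hllMean η q α b x - η (w x))
      ((1 / 2 - deriv f x / (2 * α)) * (deriv η x - deriv η (w x))) x := fun x =>
    ((hasDerivAt_hllMean (hη x).hasDerivAt (hq x)).sub
      ((hη (w x)).hasDerivAt.comp x (hw x))).congr_deriv (by ring)
  have hlip : ∀ x ∈ Icc m M, |f x - f b| ≤ α * |x - b| := fun x hx => by
    simpa only [Real.norm_eq_abs] using (convex_Icc m M).norm_image_sub_le_of_norm_deriv_le
      (fun y _ => hf y) (fun y hy => hf' y hy) hb hx
  have hmono : Monotone (deriv η) :=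
    monotoneOn_univ.1 (hηcvx.monotoneOn_deriv fun x _ => hη x)
  have hsign : ∀ x ∈ Ioo m M,
      0 ≤ (1 / 2 - deriv f x / (2 * α)) * (deriv η x - deriv η (w x)) * (x - b) := by
    intro x hx
    have hfx : deriv f x ≤ α := (le_abs_self _).trans (hf' x (Ioo_subset_Icc_self hx))
    have hfac : 0 ≤ 1 / 2 - deriv f x / (2 * α) := by
      rw [sub_nonneg, div_le_div_iff₀ (by positivity) two_pos]
      linarith
    rw [mul_assoc]
    exact mul_nonneg hfac (hmono.sub_mul_nonneg_of_sub_mul_nonneg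
      (sub_hllMean_mul_nonneg hα (hlip x (Ioo_subset_Icc_self hx))))
  have := le_of_hasDerivAt_of_mul_sub_nonneg hgap hsign hb ha
  simp only [w, hllMean, id, sub_self, zero_div, sub_zero, add_self_div_two] at this ⊢
  linarith

theorem map_average_hllMean_le (hf : Differentiable ℝ f)
    (hf' : ∀ x ∈ Icc m M, |deriv f x| ≤ α) (hη : Differentiable ℝ η)
    (hηcvx : ConvexOn ℝ univ η) (hq : ∀ x, HasDerivAt q (deriv η x * deriv f x) x)
    (hα : 0 < α) {b : ℝ} (hb : b ∈ Icc m M) {u : ℝ → ℝ} (hu : Continuous u)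
    (hu_mem : ∀ θ ∈ Icc (0:ℝ) 1, u θ ∈ Icc m M) :
    η ((b + ∫ θ in (0:ℝ)..1, u θ) / 2 - ((∫ θ in (0:ℝ)..1, f (u θ)) - f b) / (2 * α)) ≤
      (η b + ∫ θ in (0:ℝ)..1, η (u θ)) / 2 - ((∫ θ in (0:ℝ)..1, q (u θ)) - q b) / (2 * α) := by
  have hqc : Continuous q := continuous_iff_continuousAt.2 fun x => (hq x).continuousAt
  have hint : ∀ {g : ℝ → ℝ}, Continuous g → IntervalIntegrable (fun θ => g (u θ)) volume 0 1 :=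
    fun hg => (hg.comp hu).intervalIntegrable 0 1
  have hstate := integral_hllMean_comp (g := id) (hint continuous_id) (hint hf.continuous) α b
  simp only [id] at hstate
  rw [← hstate, ← integral_hllMean_comp (hint hη.continuous) (hint hqc)]
  have hstate_cont := (continuous_id.hllMean hf.continuous α b).comp hu
  refine (hηcvx.map_intervalIntegral_zero_one_le hstate_cont).trans
    (intervalIntegral.integral_mono_on zero_le_one
      ((hη.continuous.comp hstate_cont).intervalIntegrable 0 1)
      (((hη.continuous.hllMean hqc α b).comp hu).intervalIntegrable 0 1) fun θ hθ =>
        map_hllMean_le_hllMean hf hf' hη hηcvx hq hα hb (hu_mem θ hθ))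

end HLL

theorem stmt5_general (f ϑ uinv η : ℝ → ℝ) (m M Lf α : ℝ)
    (hf : ContDiff ℝ 1 f) (hf' : ∀ w ∈ Set.Icc m M, |deriv f w| ≤ Lf)
    (hconv : ∀ x, 0 < deriv (deriv ϑ) x)
    (hinvL : Function.LeftInverse uinv (deriv ϑ))
    (hinvR : Function.RightInverse uinv (deriv ϑ))
    (hcont : Continuous uinv)
    (hη : ContDiff ℝ 1 η) (hηcvx : ConvexOn ℝ Set.univ η)
    (q : ℝ → ℝ) (hq : ∀ u, q u = ∫ w in m..u, deriv η w * deriv f w)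
    (hec : ℝ → ℝ → ℝ)
    (hhec : ∀ a b, hec a b = ∫ θ in (0:ℝ)..1,
        f (uinv (θ * deriv ϑ b + (1 - θ) * deriv ϑ a)))
    (β : ℝ → ℝ → ℝ)
    (hβ : ∀ a b, a ≠ b → β a b = (1 / 2) * ∫ θ in (0:ℝ)..1,
        (uinv (θ * deriv ϑ b + (1 - θ) * deriv ϑ a) - a) / (b - a))
    (qec ηbar : ℝ → ℝ → ℝ)
    (hqec : ∀ a b, qec a b = ∫ θ in (0:ℝ)..1,
        q (uinv (θ * deriv ϑ b + (1 - θ) * deriv ϑ a)))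
    (hηbar : ∀ a b, ηbar a b = ∫ θ in (0:ℝ)..1,
        η (uinv (θ * deriv ϑ b + (1 - θ) * deriv ϑ a)))
    (um up : ℝ) (hum : um ∈ Set.Icc m M) (hup : up ∈ Set.Icc m M)
    (hLf : 0 < Lf) (hα : Lf ≤ α) :
    η ((1 - β um up) * um + β um up * up - (hec um up - f um) / (2 * α)) ≤
      (η um + ηbar um up) / 2 - (qec um up - q um) / (2 * α) := by
  set u : ℝ → ℝ := fun θ => uinv (θ * deriv ϑ up + (1 - θ) * deriv ϑ um)
  have hu : Continuous u := hcont.comp (by fun_prop)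
  have hu_mem : ∀ θ ∈ Icc (0:ℝ) 1, u θ ∈ Icc m M := fun θ hθ =>
    uIcc_subset_Icc hum hup <|
      (strictMono_of_deriv_pos hconv).rightInverse_mem_uIcc hinvR
        (mul_add_one_sub_mul_mem_uIcc hθ)
  have hq' : ∀ x, HasDerivAt q (deriv η x * deriv f x) x := by
    rw [show q = _ from funext hq]
    exact fun x => (((hη.continuous_deriv le_rfl).mul
      (hf.continuous_deriv le_rfl)).integral_hasStrictDerivAt m x).hasDerivAt
  have hmean : (1 - β um up) * um + β um up * up = (um + ∫ θ in (0:ℝ)..1, u θ) / 2 := by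
    by_cases hne : um = up
    · subst hne
      simp [u, ← add_mul, hinvL um]
    · rw [hβ um up hne, intervalIntegral.integral_div,
        intervalIntegral.integral_sub (hu.intervalIntegrable 0 1) intervalIntegrable_const,
        intervalIntegral.integral_const, sub_zero, one_smul]
      field_simp [sub_ne_zero.2 (Ne.symm hne)]
      ring
  rw [hmean, hhec, hqec, hηbar]
  exact map_average_hllMean_le (hf.differentiable one_ne_zero)
    (fun x hx => (hf' x hx).trans hα) (hη.differentiable one_ne_zero) hηcvx hq'
    (hLf.trans_le hα) hum hu hu_mem

/-- Entropy inequality for the intermediate state built on the EC flux. -/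
theorem stmt5 (f ϑ uinv η : ℝ → ℝ) (m M Lf α : ℝ)
    (hf : ContDiff ℝ 1 f) (hf' : ∀ w ∈ Set.Icc m M, |deriv f w| ≤ Lf)
    (hϑ : ContDiff ℝ 2 ϑ) (hconv : ∀ x, 0 < deriv (deriv ϑ) x)
    (hinvL : Function.LeftInverse uinv (deriv ϑ))
    (hinvR : Function.RightInverse uinv (deriv ϑ))
    (hcont : Continuous uinv)
    (hη : ContDiff ℝ 1 η) (hηcvx : ConvexOn ℝ Set.univ η)
    (q : ℝ → ℝ) (hq : ∀ u, q u = ∫ w in m..u, deriv η w * deriv f w)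
    (hec : ℝ → ℝ → ℝ)
    (hhec : ∀ a b, hec a b = ∫ θ in (0:ℝ)..1,
        f (uinv (θ * deriv ϑ b + (1 - θ) * deriv ϑ a)))
    (β : ℝ → ℝ → ℝ)
    (hβdiag : ∀ a, β a a = 1 / 4)
    (hβ : ∀ a b, a ≠ b → β a b = (1 / 2) * ∫ θ in (0:ℝ)..1,
        (uinv (θ * deriv ϑ b + (1 - θ) * deriv ϑ a) - a) / (b - a))
    (qec ηbar : ℝ → ℝ → ℝ)
    (hqec : ∀ a b, qec a b = ∫ θ in (0:ℝ)..1,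
        q (uinv (θ * deriv ϑ b + (1 - θ) * deriv ϑ a)))
    (hηbar : ∀ a b, ηbar a b = ∫ θ in (0:ℝ)..1,
        η (uinv (θ * deriv ϑ b + (1 - θ) * deriv ϑ a)))
    (um up : ℝ) (hum : um ∈ Set.Icc m M) (hup : up ∈ Set.Icc m M)
    (hLf : 0 < Lf) (hα : Lf ≤ α) :
    η ((1 - β um up) * um + β um up * up - (hec um up - f um) / (2 * α)) ≤
      (η um + ηbar um up) / 2 - (qec um up - q um) / (2 * α) :=
  stmt5_general f ϑ uinv η m M Lf α hf hf' hconv hinvL hinvR hcont hη hηcvx q hq hec hhec β hβ qec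
    ηbar hqec hηbar um up hum hup hLf hα
end

section
/- Let h : ℝ × ℝ → ℝ be a monotone, consistent (h(u,u)=f(u)), Lipschitz numerical flux whose Lipschitz constants L₁, L₂ in its two arguments satisfy L₁ + L₂ ≤ 2α. Then for all u⁻, u, u⁺ ∈ [m,M], the three-point update u − (h(u,u⁺) − h(u⁻,u))/(2α) lies in [m,M]. -/
/-- Maximum principle for the three-point scheme with a monotone flux. -/
theorem stmt9 (f : ℝ → ℝ) (h : ℝ → ℝ → ℝ) (m M L1 L2 α : ℝ)
    (hmono : ∀ b, Monotone (fun a => h a b))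
    (hanti : ∀ a, Antitone (fun b => h a b))
    (hcons : ∀ u, h u u = f u)
    (hL1 : ∀ a a' b, |h a b - h a' b| ≤ L1 * |a - a'|)
    (hL2 : ∀ a b b', |h a b - h a b'| ≤ L2 * |b - b'|)
    (hα : L1 + L2 ≤ 2 * α) (hα0 : 0 < α)
    (um u up : ℝ) (hum : um ∈ Set.Icc m M) (hu : u ∈ Set.Icc m M)
    (hup : up ∈ Set.Icc m M) :
    u - (h u up - h um u) / (2 * α) ∈ Set.Icc m M := by
  obtain ⟨hm1, hM1⟩ := hum
  obtain ⟨hm2, hM2⟩ := hu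
  obtain ⟨hm3, hM3⟩ := hup
  have h2α : (0:ℝ) < 2 * α := by linarith
  -- monotonicity in the middle argument (uses the CFL condition)
  have mid : ∀ a b b' c, b ≤ b' →
      b - (h b c - h a b) / (2 * α) ≤ b' - (h b' c - h a b') / (2 * α) := by
    intro a b b' c hbb
    have h1 : h b' c - h b c ≤ L1 * (b' - b) := by
      calc h b' c - h b c ≤ |h b' c - h b c| := le_abs_self _
        _ ≤ L1 * |b' - b| := hL1 _ _ _
        _ = L1 * (b' - b) := by rw [abs_of_nonneg (by linarith)]
    have h2 : h a b - h a b' ≤ L2 * (b' - b) := by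
      calc h a b - h a b' ≤ |h a b - h a b'| := le_abs_self _
        _ ≤ L2 * |b - b'| := hL2 _ _ _
        _ = L2 * (b' - b) := by rw [abs_sub_comm, abs_of_nonneg (by linarith)]
    have key : (h b' c - h a b') / (2 * α) - (h b c - h a b) / (2 * α) ≤ b' - b := by
      rw [div_sub_div_same, div_le_iff₀ h2α]
      nlinarith [sub_nonneg.2 hbb]
    linarith
  -- monotonicity in the left argument
  have left : ∀ a a' b c, a ≤ a' →
      b - (h b c - h a b) / (2 * α) ≤ b - (h b c - h a' b) / (2 * α) := by
    intro a a' b c haa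
    have h1 : h a b ≤ h a' b := hmono b haa
    have : (h b c - h a' b) / (2 * α) ≤ (h b c - h a b) / (2 * α) :=
      (div_le_div_iff_of_pos_right h2α).2 (by linarith)
    linarith
  -- monotonicity in the right argument
  have right : ∀ a b c c', c ≤ c' →
      b - (h b c - h a b) / (2 * α) ≤ b - (h b c' - h a b) / (2 * α) := by
    intro a b c c' hcc
    have h1 : h b c' ≤ h b c := hanti b hcc
    have : (h b c' - h a b) / (2 * α) ≤ (h b c - h a b) / (2 * α) :=
      (div_le_div_iff_of_pos_right h2α).2 (by linarith)
    linarith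
  constructor
  · have s1 : m - (h m m - h m m) / (2 * α) ≤ u - (h u m - h m u) / (2 * α) :=
      mid m m u m hm2
    have s2 : u - (h u m - h m u) / (2 * α) ≤ u - (h u up - h m u) / (2 * α) :=
      right m u m up hm3
    have s3 : u - (h u up - h m u) / (2 * α) ≤ u - (h u up - h um u) / (2 * α) :=
      left m um u up hm1
    have : m - (h m m - h m m) / (2 * α) = m := by simp
    linarith
  · have s1 : u - (h u up - h um u) / (2 * α) ≤ u - (h u up - h M u) / (2 * α) :=
      left um M u up hM1
    have s2 : u - (h u up - h M u) / (2 * α) ≤ u - (h u M - h M u) / (2 * α) :=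
      right M u up M hM3
    have s3 : u - (h u M - h M u) / (2 * α) ≤ M - (h M M - h M M) / (2 * α) :=
      mid M u M M hM2
    have : M - (h M M - h M M) / (2 * α) = M := by simp
    linarith
end

section
/- With U_ec as above and u⁻ ≠ u⁺, U_ec(u⁻,u⁺) = 2β(u⁻,u⁺)(u⁺−u⁻) + u⁻, where β is as defined in the paper; in particular U_ec(u⁻,u⁺) is a convex combination of u⁻ and u⁺ and lies between min(u⁻,u⁺) and max(u⁻,u⁺). -/
/-- U_ec = 2β(u⁺−u⁻)+u⁻ and U_ec lies between min and max of the two states. -/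
theorem stmt11 (ϑ uinv : ℝ → ℝ)
    (hϑ : ContDiff ℝ 2 ϑ) (hconv : ∀ x, 0 < deriv (deriv ϑ) x)
    (hinvL : Function.LeftInverse uinv (deriv ϑ))
    (hinvR : Function.RightInverse uinv (deriv ϑ))
    (hcont : Continuous uinv)
    (um up : ℝ) (hne : um ≠ up) :
    (∫ θ in (0:ℝ)..1, uinv (θ * deriv ϑ up + (1 - θ) * deriv ϑ um)) =
        2 * ((1 / 2) * ∫ θ in (0:ℝ)..1,
            (uinv (θ * deriv ϑ up + (1 - θ) * deriv ϑ um) - um) / (up - um)) *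
          (up - um) + um ∧
    (∫ θ in (0:ℝ)..1, uinv (θ * deriv ϑ up + (1 - θ) * deriv ϑ um))
      ∈ Set.Icc (min um up) (max um up) := by
  -- basic notation
  set f : ℝ → ℝ := fun θ => uinv (θ * deriv ϑ up + (1 - θ) * deriv ϑ um) with hf
  have hfc : Continuous f := by
    apply hcont.comp
    continuity
  have hfi : IntervalIntegrable f MeasureTheory.volume 0 1 :=
    hfc.intervalIntegrable 0 1
  -- deriv ϑ is strictly monotone
  have hd1 : ContDiff ℝ 1 (deriv ϑ) := by
    have := (contDiff_succ_iff_deriv (n := 1)).mp (by norm_num at hϑ ⊢; exact hϑ)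
    exact this.2.2
  have hdiff : Differentiable ℝ (deriv ϑ) := hd1.differentiable (by norm_num)
  have hsm : StrictMono (deriv ϑ) :=
    strictMono_of_deriv_pos (fun x => hconv x)
  have hsu : StrictMono uinv := by
    intro a b hab
    have : deriv ϑ (uinv a) < deriv ϑ (uinv b) := by rw [hinvR, hinvR]; exact hab
    exact hsm.lt_iff_lt.mp this
  have hmu : Monotone uinv := hsu.monotone
  -- pointwise bounds for f on [0,1]
  have hbound : ∀ θ ∈ Set.Icc (0:ℝ) 1,
      min um up ≤ f θ ∧ f θ ≤ max um up := by
    intro θ hθ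
    obtain ⟨h0, h1⟩ := hθ
    have hlow : min (deriv ϑ um) (deriv ϑ up) ≤ θ * deriv ϑ up + (1 - θ) * deriv ϑ um := by
      have h1' : 0 ≤ 1 - θ := by linarith
      nlinarith [min_le_left (deriv ϑ um) (deriv ϑ up), min_le_right (deriv ϑ um) (deriv ϑ up)]
    have hhigh : θ * deriv ϑ up + (1 - θ) * deriv ϑ um ≤ max (deriv ϑ um) (deriv ϑ up) := by
      have h1' : 0 ≤ 1 - θ := by linarith
      nlinarith [le_max_left (deriv ϑ um) (deriv ϑ up), le_max_right (deriv ϑ um) (deriv ϑ up)]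
    constructor
    · have := hmu hlow
      rwa [hmu.map_min, hinvL um, hinvL up] at this
    · have := hmu hhigh
      rwa [hmu.map_max, hinvL um, hinvL up] at this
  -- integral bounds
  have hlowI : min um up ≤ ∫ θ in (0:ℝ)..1, f θ := by
    have h := intervalIntegral.integral_mono_on (a := (0:ℝ)) (b := 1) (by norm_num)
      (intervalIntegrable_const (c := min um up)) hfi
      (fun x hx => (hbound x hx).1)
    simpa using h
  have hhighI : (∫ θ in (0:ℝ)..1, f θ) ≤ max um up := by
    have h := intervalIntegral.integral_mono_on (a := (0:ℝ)) (b := 1) (by norm_num)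
      hfi (intervalIntegrable_const (c := max um up))
      (fun x hx => (hbound x hx).2)
    simpa using h
  have hsub : up - um ≠ 0 := sub_ne_zero.mpr (Ne.symm hne)
  constructor
  · have h1 : (∫ θ in (0:ℝ)..1, (f θ - um) / (up - um))
        = ((∫ θ in (0:ℝ)..1, f θ) - um) / (up - um) := by
      rw [intervalIntegral.integral_div, intervalIntegral.integral_sub hfi
        (intervalIntegrable_const (c := um))]
      simp
    rw [h1]
    field_simp
    ring
  · exact ⟨hlowI, hhighI⟩
end

section
/- Let ϑ be C² with ϑ'' > 0, v = ϑ', and suppose L_u := sup over m ≤ a ≠ b ≤ M of ϑ''(b)(b−a)/(v(b)−v(a)) is finite. Then the partial derivative of the EC time flux satisfies 0 ≤ ∂₁ U_ec(u⁻,u⁺) ≤ L_u for all u⁻ ≠ u⁺ in [m,M], where ∂₁U_ec(u⁻,u⁺) = v'(u⁻)(ϑ(u⁻) − ϑ(u⁺) − v(u⁺)(u⁻−u⁺))/(v(u⁺)−v(u⁻))². -/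
/-- Bounds 0 ≤ ∂₁U_ec ≤ L_u on the partial derivative of the EC time flux. -/
theorem stmt12 (ϑ : ℝ → ℝ) (m M Lu : ℝ)
    (hϑ : ContDiff ℝ 2 ϑ) (hconv : ∀ x, 0 < deriv (deriv ϑ) x)
    (hLu : ∀ a ∈ Set.Icc m M, ∀ b ∈ Set.Icc m M, a ≠ b →
      deriv (deriv ϑ) b * (b - a) / (deriv ϑ b - deriv ϑ a) ≤ Lu)
    (um up : ℝ) (hum : um ∈ Set.Icc m M) (hup : up ∈ Set.Icc m M) (hne : um ≠ up) :
    0 ≤ deriv (deriv ϑ) um * (ϑ um - ϑ up - deriv ϑ up * (um - up)) /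
        (deriv ϑ up - deriv ϑ um) ^ 2 ∧
    deriv (deriv ϑ) um * (ϑ um - ϑ up - deriv ϑ up * (um - up)) /
        (deriv ϑ up - deriv ϑ um) ^ 2 ≤ Lu := by
  have hd1 : Differentiable ℝ ϑ := hϑ.differentiable (by norm_num)
  have hvm : StrictMono (deriv ϑ) := strictMono_of_deriv_pos hconv
  have hwum : 0 < deriv (deriv ϑ) um := hconv um
  have hL : deriv (deriv ϑ) um * (um - up) / (deriv ϑ um - deriv ϑ up) ≤ Lu :=
    hLu up hup um hum (Ne.symm hne)
  -- E bounds via MVT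
  obtain hlt | hlt := hne.lt_or_gt
  · -- um < up
    obtain ⟨c, hc, hvc⟩ := exists_deriv_eq_slope ϑ hlt (hd1.continuous.continuousOn)
      (hd1.differentiableOn)
    have hvc' : ϑ up - ϑ um = deriv ϑ c * (up - um) := by
      rw [eq_div_iff (by linarith : up - um ≠ 0)] at hvc; linarith
    have h1 : deriv ϑ um < deriv ϑ c := hvm hc.1
    have h2 : deriv ϑ c < deriv ϑ up := hvm hc.2
    have hD : 0 < deriv ϑ up - deriv ϑ um := by linarith [hvm hlt]
    have hE : 0 < ϑ um - ϑ up - deriv ϑ up * (um - up) := by nlinarith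
    have hE2 : ϑ um - ϑ up - deriv ϑ up * (um - up) ≤
        (deriv ϑ up - deriv ϑ um) * (up - um) := by nlinarith
    constructor
    · exact div_nonneg (mul_nonneg hwum.le hE.le) (sq_nonneg _)
    · rw [div_le_iff₀ (by positivity)]
      have hL' : deriv (deriv ϑ) um * (up - um) ≤ Lu * (deriv ϑ up - deriv ϑ um) := by
        rw [div_le_iff_of_neg (by linarith : deriv ϑ um - deriv ϑ up < 0)] at hL
        nlinarith
      nlinarith
  · -- up < um
    obtain ⟨c, hc, hvc⟩ := exists_deriv_eq_slope ϑ hlt (hd1.continuous.continuousOn)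
      (hd1.differentiableOn)
    have hvc' : ϑ um - ϑ up = deriv ϑ c * (um - up) := by
      rw [eq_div_iff (by intro h; exact hne (by linarith) : um - up ≠ 0)] at hvc; linarith
    have h1 : deriv ϑ up < deriv ϑ c := hvm hc.1
    have h2 : deriv ϑ c < deriv ϑ um := hvm hc.2
    have hD : 0 < deriv ϑ um - deriv ϑ up := by linarith
    have hE : 0 < ϑ um - ϑ up - deriv ϑ up * (um - up) := by nlinarith
    have hE2 : ϑ um - ϑ up - deriv ϑ up * (um - up) ≤
        (deriv ϑ um - deriv ϑ up) * (um - up) := by nlinarith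
    constructor
    · exact div_nonneg (mul_nonneg hwum.le hE.le) (sq_nonneg _)
    · rw [div_le_iff₀ (by nlinarith : (0:ℝ) < (deriv ϑ up - deriv ϑ um)^2)]
      have hL' : deriv (deriv ϑ) um * (um - up) ≤ Lu * (deriv ϑ um - deriv ϑ up) := by
        rw [div_le_iff₀ hD] at hL
        nlinarith
      nlinarith
end

section
/- Let f be C¹ with |f'| ≤ L_f on [m,M], ϑ C² with ϑ'' > 0, v = ϑ' with inverse u(·), L_u as defined above, and h_ec(u⁻,u⁺) = (ψ(u⁺)−ψ(u⁻))/(v(u⁺)−v(u⁻)) with ψ(u) = v(u)f(u) − g(u), g' = v f'. Then for u ≠ u⁺ in [m,M], |∂₁ h_ec(u,u⁺)| ≤ L_f · L_u. -/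
/-!
Writing `v = ϑ'`, integration by parts turns the numerator of `∂₁h_ec(u, u⁺)` into
`∫ᵤ^{u⁺} v'(w) (f(w) - f(u)) dw`. Since `v' > 0` and `|f(w) - f(u)| ≤ L_f |u⁺ - u|` on the
interval, this is at most `L_f |u⁺ - u| |v(u⁺) - v(u)|` in absolute value, so the whole
derivative is bounded by `L_f` times the difference-quotient ratio `v'(u) (u - u⁺) / (v(u) - v(u⁺))`,
which is at most `L_u`.
-/

open Set intervalIntegral MeasureTheory

theorem integral_deriv_mul_sub_eq {v v' f f' : ℝ → ℝ} {a b : ℝ}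
    (hv : ∀ x ∈ uIcc a b, HasDerivAt v (v' x) x) (hf : ∀ x ∈ uIcc a b, HasDerivAt f (f' x) x)
    (hv' : IntervalIntegrable v' volume a b) (hf' : IntervalIntegrable f' volume a b) :
    ∫ x in a..b, v' x * (f x - f a) = v b * (f b - f a) - ∫ x in a..b, v x * f' x := by
  have hparts := integral_mul_deriv_eq_deriv_mul hv
    (fun x hx => (hf x hx).sub_const (f a)) hv' hf'
  rw [hparts, sub_self, mul_zero, sub_zero]
  ring

theorem abs_integral_deriv_mul_sub_le {v v' f : ℝ → ℝ} {a b L : ℝ}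
    (hv : ∀ x ∈ uIcc a b, HasDerivAt v (v' x) x) (hv' : IntervalIntegrable v' volume a b)
    (hv'_nonneg : ∀ x ∈ uIcc a b, 0 ≤ v' x) (hL : 0 ≤ L)
    (hf : ∀ x ∈ uIcc a b, |f x - f a| ≤ L * |x - a|) :
    |∫ x in a..b, v' x * (f x - f a)| ≤ L * |b - a| * |v b - v a| := by
  have hpointwise : ∀ x ∈ uIcc a b, |v' x * (f x - f a)| ≤ L * |b - a| * v' x := by
    intro x hx
    rw [abs_mul, abs_of_nonneg (hv'_nonneg x hx), mul_comm]
    gcongr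
    · exact hv'_nonneg x hx
    · exact (hf x hx).trans (mul_le_mul_of_nonneg_left (abs_sub_left_of_mem_uIcc hx) hL)
  calc |∫ x in a..b, v' x * (f x - f a)|
      ≤ |∫ x in a..b, L * |b - a| * v' x| :=
        Real.norm_eq_abs _ ▸ norm_integral_le_abs_of_norm_le
          (ae_restrict_of_forall_mem measurableSet_uIoc fun x hx =>
            Real.norm_eq_abs _ ▸ hpointwise x (uIoc_subset_uIcc hx))
          (hv'.const_mul _)
    _ = L * |b - a| * |v b - v a| := by
        rw [intervalIntegral.integral_const_mul, integral_eq_sub_of_hasDerivAt hv hv', abs_mul,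
          abs_of_nonneg (by positivity)]

theorem Monotone.sub_div_sub_eq_abs {v : ℝ → ℝ} (hv : Monotone v) (a b : ℝ) :
    (a - b) / (v a - v b) = |a - b| / |v a - v b| := by
  rw [← abs_div, abs_of_nonneg]
  rcases le_total a b with hab | hab
  · exact div_nonneg_of_nonpos (sub_nonpos.2 hab) (sub_nonpos.2 (hv hab))
  · exact div_nonneg (sub_nonneg.2 hab) (sub_nonneg.2 (hv hab))

/-- Bound |∂₁h_ec(u,u⁺)| ≤ L_f·L_u on the partial derivative of the EC flux. -/
theorem stmt14 (f ϑ : ℝ → ℝ) (m M Lf Lu : ℝ)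
    (hf : ContDiff ℝ 1 f) (hf' : ∀ w ∈ Set.Icc m M, |deriv f w| ≤ Lf)
    (hϑ : ContDiff ℝ 2 ϑ) (hconv : ∀ x, 0 < deriv (deriv ϑ) x)
    (g ψ : ℝ → ℝ)
    (hg : ∀ u, g u = ∫ w in m..u, deriv ϑ w * deriv f w)
    (hψ : ∀ u, ψ u = deriv ϑ u * f u - g u)
    (hLu : ∀ a ∈ Set.Icc m M, ∀ b ∈ Set.Icc m M, a ≠ b →
      deriv (deriv ϑ) b * (b - a) / (deriv ϑ b - deriv ϑ a) ≤ Lu)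
    (u up : ℝ) (hu : u ∈ Set.Icc m M) (hup : up ∈ Set.Icc m M) (hne : u ≠ up) :
    |deriv (deriv ϑ) u * (ψ up - ψ u - (deriv ϑ up - deriv ϑ u) * f u) /
        (deriv ϑ up - deriv ϑ u) ^ 2| ≤ Lf * Lu := by
  set v := deriv ϑ
  have hv : ContDiff ℝ 1 v := hϑ.deriv'
  have hv_deriv (x : ℝ) (_ : x ∈ uIcc u up) : HasDerivAt v (deriv v x) x :=
    (hv.differentiable one_ne_zero x).hasDerivAt
  have hv'_int := (hv.continuous_deriv le_rfl).intervalIntegrable (μ := volume) u up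
  have hv_mono : StrictMono v := strictMono_of_deriv_pos hconv
  have hLf : 0 ≤ Lf := (abs_nonneg _).trans (hf' u hu)
  have hf_lip : ∀ w ∈ uIcc u up, |f w - f u| ≤ Lf * |w - u| := by
    intro w hw
    have hw' : w ∈ Icc m M := (ordConnected_Icc.uIcc_subset hu hup) hw
    simpa only [Real.norm_eq_abs] using (convex_Icc m M).norm_image_sub_le_of_norm_deriv_le
      (fun x _ => hf.differentiable one_ne_zero x) (fun x hx => hf' x hx) hu hw'
  have hnum : ψ up - ψ u - (v up - v u) * f u = ∫ w in u..up, deriv v w * (f w - f u) := by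
    have hvf'_int : ∀ a b, IntervalIntegrable (fun w => v w * deriv f w) volume a b :=
      fun a b => (hv.continuous.mul (hf.continuous_deriv le_rfl)).intervalIntegrable a b
    rw [integral_deriv_mul_sub_eq hv_deriv
        (fun x _ => (hf.differentiable one_ne_zero x).hasDerivAt) hv'_int
        ((hf.continuous_deriv le_rfl).intervalIntegrable u up),
      hψ, hψ, hg, hg, ← integral_interval_sub_left (hvf'_int m up) (hvf'_int m u)]
    ring
  have hnum_le : |ψ up - ψ u - (v up - v u) * f u| ≤ Lf * |up - u| * |v up - v u| := by
    rw [hnum]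
    exact abs_integral_deriv_mul_sub_le hv_deriv hv'_int (fun x _ => (hconv x).le) hLf hf_lip
  have hratio : deriv v u * |up - u| / |v up - v u| ≤ Lu := by
    rw [abs_sub_comm up u, abs_sub_comm (v up), mul_div_assoc,
      ← hv_mono.monotone.sub_div_sub_eq_abs, ← mul_div_assoc]
    exact hLu up hup u hu hne.symm
  have hΔ : 0 < |v up - v u| := abs_pos.2 (sub_ne_zero.2 (hv_mono.injective.ne hne.symm))
  calc |deriv v u * (ψ up - ψ u - (v up - v u) * f u) / (v up - v u) ^ 2|
      = deriv v u * |ψ up - ψ u - (v up - v u) * f u| / |v up - v u| ^ 2 := by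
        rw [abs_div, abs_mul, abs_of_pos (hconv u), abs_pow]
    _ ≤ deriv v u * (Lf * |up - u| * |v up - v u|) / |v up - v u| ^ 2 := by
        gcongr
        exact (hconv u).le
    _ = Lf * (deriv v u * |up - u| / |v up - v u|) := by
        field_simp
    _ ≤ Lf * Lu := mul_le_mul_of_nonneg_left hratio hLf
end
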